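/- Let X be an arithmetic L-space and F a Scott upset of X. If y ∈ max Y \ F, then there is a clopen Scott upset U of X with y ∈ U and U ∩ F = ∅. -/
import Mathlib


open Set Topology

variable {X : Type*} [TopologicalSpace X] [PartialOrder X]

/-- The downward closure `↓A` of a subset of a poset. -/
def dwC (A : Set X) : Set X := {x : X | ∃ a ∈ A, x ≤ a}

/-- The upward closure `↑A` of a subset of a poset. -/
def upC (A : Set X) : Set X := {x : X | ∃ a ∈ A, a ≤ x}

/-- The set of maximal points of a subset of a poset. -/
def maxOf (A : Set X) : Set X := {x ∈ A | ∀ z ∈ A, x ≤ z → z = x}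

/-- The set of minimal points of a subset of a poset. -/
def minOf (A : Set X) : Set X := {x ∈ A | ∀ z ∈ A, z ≤ x → z = x}

/-- A Priestley space: compact with the Priestley separation axiom. -/
def IsPriestley (X : Type*) [TopologicalSpace X] [PartialOrder X] : Prop :=
  CompactSpace X ∧
    ∀ x y : X, ¬x ≤ y → ∃ U : Set X, IsClopen U ∧ IsUpperSet U ∧ x ∈ U ∧ y ∉ U

/-- An L-space: a Priestley space where the closure of every open upset is an open upset. -/
def IsLSpace (X : Type*) [TopologicalSpace X] [PartialOrder X] : Prop :=
  IsPriestley X ∧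
    ∀ U : Set X, IsOpen U → IsUpperSet U → IsOpen (closure U) ∧ IsUpperSet (closure U)

/-- The set `Y` of localic points: those `y` with `↓y` clopen. -/
def localicPts (X : Type*) [TopologicalSpace X] [PartialOrder X] : Set X :=
  {y : X | IsClopen (dwC ({y} : Set X))}

/-- A Scott upset: a closed upset whose minimal points are localic. -/
def IsScottUp (F : Set X) : Prop :=
  IsClosed F ∧ IsUpperSet F ∧ minOf F ⊆ localicPts X

/-- The collection of clopen Scott upsets of `X`. -/
def ClopSUp (X : Type*) [TopologicalSpace X] [PartialOrder X] : Set (Set X) :=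
  {U : Set X | IsClopen U ∧ IsScottUp U}

/-- The core of a clopen upset: the union of the clopen Scott upsets inside it. -/
def coreC (U : Set X) : Set X := ⋃₀ {V : Set X | V ∈ ClopSUp X ∧ V ⊆ U}

/-- An algebraic L-space: the core of each clopen upset is dense in it. -/
def IsAlgebraicLSpace (X : Type*) [TopologicalSpace X] [PartialOrder X] : Prop :=
  IsLSpace X ∧ ∀ U : Set X, IsClopen U → IsUpperSet U → U ⊆ closure (coreC U)

/-- An arithmetic L-space: an algebraic L-space in which the intersection of any
two clopen Scott upsets is again a Scott upset. -/
def IsArithmeticLSpace (X : Type*) [TopologicalSpace X] [PartialOrder X] : Prop :=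
  IsAlgebraicLSpace X ∧
    ∀ U V : Set X, U ∈ ClopSUp X → V ∈ ClopSUp X → IsScottUp (U ∩ V)

/-- A nuclear subset of an L-space. -/
def IsNuclearSub (N : Set X) : Prop :=
  IsClosed N ∧ ∀ U : Set X, IsClopen U → IsClopen (dwC (U ∩ N))

/-- The nucleus `j_N` associated to a nuclear subset: `j_N U = X \ ↓(N \ U)`. -/
def jN (N U : Set X) : Set X := (dwC (N \ U))ᶜ

/-- A nuclear subset is inductive if `↑(F ∩ N)` is a Scott upset for every Scott upset `F`. -/
def IsInductiveNuclear (N : Set X) : Prop :=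
  ∀ F : Set X, IsScottUp F → IsScottUp (upC (F ∩ N))

/-- The pseudocomplement `V* = X \ ↓V`. -/
def starC (V : Set X) : Set X := (dwC V)ᶜ

/-- The `d`-nucleus on clopen upsets: `d U = cl ⋃ {V** : V ∈ ClopSUp X, V ⊆ U}`. -/
def dOp (U : Set X) : Set X :=
  closure (⋃₀ {W : Set X | ∃ V ∈ ClopSUp X, V ⊆ U ∧ W = starC (starC V)})

/-- The `d`-core: `core_d U = ⋃ {d V : V ∈ ClopSUp X, V ⊆ U}`. -/
def coreD (U : Set X) : Set X :=
  ⋃₀ {W : Set X | ∃ V ∈ ClopSUp X, V ⊆ U ∧ W = dOp V}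

/-- The topology on a subset `S ⊆ X` whose opens are (generated by) the traces of
clopen upsets of `X`. -/
def traceTop (S : Set X) : TopologicalSpace S :=
  TopologicalSpace.generateFrom
    {V : Set S | ∃ U : Set X, IsClopen U ∧ IsUpperSet U ∧ V = Subtype.val ⁻¹' U}


section Stmt12Aux

set_option linter.unusedSectionVars false in
lemma dwC_mono' {A B : Set X} (h : A ⊆ B) : dwC A ⊆ dwC B :=
  fun _ ⟨a, ha, hx⟩ => ⟨a, h ha, hx⟩

set_option linter.unusedSectionVars false in
lemma mem_dwC_self' {A : Set X} {a : X} (ha : a ∈ A) : a ∈ dwC A := ⟨a, ha, le_refl a⟩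

set_option linter.unusedSectionVars false in
lemma isLowerSet_dwC' (A : Set X) : IsLowerSet (dwC A) :=
  fun _ _ hle ⟨a, ha, hb⟩ => ⟨a, ha, le_trans hle hb⟩


set_option linter.unusedSectionVars false in
lemma dwC_singleton_mono {u v : X} (h : u ≤ v) :
    dwC ({u} : Set X) ⊆ dwC ({v} : Set X) := by
  rintro w ⟨a, ha, hw⟩
  rw [mem_singleton_iff] at ha
  exact ⟨v, rfl, le_trans (ha ▸ hw) h⟩

lemma priestley_totSep (hP : IsPriestley X) : TotallySeparatedSpace X := by
  rw [totallySeparatedSpace_iff_exists_isClopen]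
  intro x y hxy
  by_cases h : x ≤ y
  · have hne : ¬ y ≤ x := fun hyx => hxy (le_antisymm h hyx)
    obtain ⟨U, hU, -, hyU, hxU⟩ := hP.2 y x hne
    exact ⟨Uᶜ, hU.compl, hxU, by simpa using hyU⟩
  · obtain ⟨U, hU, -, hxU, hyU⟩ := hP.2 x y h
    exact ⟨U, hU, hxU, hyU⟩

/-- Separation of a point from (the down-closure of) a closed set it is not below. -/
lemma sep_from_closed (hP : IsPriestley X) {C : Set X} (hC : IsClosed C) {x : X}
    (hx : ∀ c ∈ C, ¬ x ≤ c) :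
    ∃ A : Set X, IsClopen A ∧ IsUpperSet A ∧ x ∈ A ∧ A ∩ dwC C = ∅ := by
  haveI := hP.1
  have hCc : IsCompact C := hC.isCompact
  have hch : ∀ c : C, ∃ A : Set X, IsClopen A ∧ IsUpperSet A ∧ x ∈ A ∧ (c : X) ∉ A :=
    fun c => hP.2 x c (hx c c.2)
  choose A hAcl hAu hAx hAc using hch
  have hcover : C ⊆ ⋃ c : C, (A c)ᶜ := fun c hc =>
    mem_iUnion.2 ⟨⟨c, hc⟩, hAc ⟨c, hc⟩⟩
  obtain ⟨t, ht⟩ := hCc.elim_finite_subcover (fun c : C => (A c)ᶜ)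
    (fun c => (hAcl c).compl.2) hcover
  refine ⟨⋂ c ∈ t, A c, isClopen_biInter_finset fun c _ => hAcl c, ?_, ?_, ?_⟩
  · exact fun a b hab ha => mem_iInter₂.2 fun c hc => hAu c hab (mem_iInter₂.1 ha c hc)
  · exact mem_iInter₂.2 fun c _ => hAx c
  · ext z
    simp only [mem_inter_iff, mem_empty_iff_false, iff_false, not_and]
    rintro hz ⟨c, hcC, hzc⟩
    have hcA : c ∈ ⋂ j ∈ t, A j :=
      mem_iInter₂.2 fun j hj => hAu j hzc (mem_iInter₂.1 hz j hj)
    obtain ⟨i, hit, hci⟩ := mem_iUnion₂.1 (ht hcC)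
    exact hci (mem_iInter₂.1 hcA i hit)

lemma dwC_closed (hP : IsPriestley X) {C : Set X} (hC : IsClosed C) :
    IsClosed (dwC C) := by
  rw [← isOpen_compl_iff]
  rw [isOpen_iff_forall_mem_open]
  intro x hx
  have hx' : ∀ c ∈ C, ¬ x ≤ c := fun c hc hle => hx ⟨c, hc, hle⟩
  obtain ⟨A, hAcl, -, hxA, hA⟩ := sep_from_closed hP hC hx'
  exact ⟨A, fun a ha => fun hmem => (eq_empty_iff_forall_notMem.1 hA a) ⟨ha, hmem⟩,
    hAcl.2, hxA⟩

lemma dwC_singleton_closed (hP : IsPriestley X) (z : X) : IsClosed (dwC ({z} : Set X)) := by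
  haveI := hP.1
  haveI := priestley_totSep hP
  exact dwC_closed hP isClosed_singleton

/-- Every point of a closed subset lies above a minimal point of it. -/
lemma exists_min_le (hP : IsPriestley X) {C : Set X} (hC : IsClosed C) {x : X}
    (hx : x ∈ C) : ∃ m, m ∈ minOf C ∧ m ≤ x := by
  haveI := hP.1
  let S := {z : X // z ∈ C ∧ z ≤ x}
  let r : S → S → Prop := fun a b => b.1 ≤ a.1
  have hzorn : ∃ m : S, ∀ a : S, r m a → r a m := by
    apply exists_maximal_of_chains_bounded (r := r)
    · intro c hc
      rcases c.eq_empty_or_nonempty with rfl | hne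
      · exact ⟨⟨x, hx, le_refl x⟩, fun a ha => absurd ha (notMem_empty a)⟩
      · haveI : Nonempty c := hne.to_subtype
        have hdir : Directed (· ⊇ ·) (fun z : c => C ∩ dwC ({((z : S)).1} : Set X)) := by
          rintro za zb
          haveI : IsRefl S r := ⟨fun a => le_refl _⟩
          rcases hc.total za.2 zb.2 with h | h
          · exact ⟨zb, inter_subset_inter Subset.rfl (dwC_singleton_mono h), Subset.rfl⟩
          · exact ⟨za, Subset.rfl, inter_subset_inter Subset.rfl (dwC_singleton_mono h)⟩
        have key : (⋂ z : c, (C ∩ dwC ({((z : S)).1} : Set X))).Nonempty :=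
          IsCompact.nonempty_iInter_of_directed_nonempty_isCompact_isClosed _ hdir
            (fun z => ⟨((z : S)).1, ((z : S)).2.1, mem_dwC_self' rfl⟩)
            (fun _ => ((hC.inter (dwC_singleton_closed hP _)).isCompact))
            (fun _ => hC.inter (dwC_singleton_closed hP _))
        obtain ⟨w, hw⟩ := key
        obtain ⟨z₀⟩ := ‹Nonempty c›
        have hwz : ∀ z : c, w ≤ ((z : S)).1 := by
          intro z
          obtain ⟨-, a, ha, hle⟩ := mem_iInter.1 hw z
          rw [mem_singleton_iff] at ha
          rwa [ha] at hle
        have hwC : w ∈ C := (mem_iInter.1 hw z₀).1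
        exact ⟨⟨w, hwC, le_trans (hwz z₀) (z₀ : S).2.2⟩, fun a ha => hwz ⟨a, ha⟩⟩
    · exact fun {a b c} hab hbc => le_trans hbc hab
  obtain ⟨m, hm⟩ := hzorn
  refine ⟨m.1, ⟨m.2.1, ?_⟩, m.2.2⟩
  intro z hz hle
  have h2 : m.1 ≤ z := hm ⟨z, hz, le_trans hle m.2.2⟩ hle
  exact le_antisymm hle h2

/-- A closed upset can be separated from a point not in it by a clopen upset. -/
lemma closed_upset_sep (hP : IsPriestley X) {F : Set X} (hFc : IsClosed F)
    (hFu : IsUpperSet F) {x : X} (hx : x ∉ F) :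
    ∃ A : Set X, IsClopen A ∧ IsUpperSet A ∧ F ⊆ A ∧ x ∉ A := by
  haveI := hP.1
  have hch : ∀ f : F, ∃ A : Set X, IsClopen A ∧ IsUpperSet A ∧ (f : X) ∈ A ∧ x ∉ A := by
    intro f
    have : ¬ (f : X) ≤ x := fun hle => hx (hFu hle f.2)
    exact hP.2 f x this
  choose A hAcl hAu hAf hAx using hch
  have hcover : F ⊆ ⋃ f : F, A f := fun f hf => mem_iUnion.2 ⟨⟨f, hf⟩, hAf ⟨f, hf⟩⟩
  obtain ⟨t, ht⟩ := hFc.isCompact.elim_finite_subcover (fun f : F => A f)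
    (fun f => (hAcl f).2) hcover
  refine ⟨⋃ f ∈ t, A f, isClopen_biUnion_finset fun f _ => hAcl f, ?_, ht, ?_⟩
  · exact fun a b hab ha => by
      obtain ⟨i, hit, hai⟩ := mem_iUnion₂.1 ha
      exact mem_iUnion₂.2 ⟨i, hit, hAu i hab hai⟩
  · intro hmem
    obtain ⟨i, -, hxi⟩ := mem_iUnion₂.1 hmem
    exact hAx i hxi

/-- In an L-space, the downset of a clopen set is clopen. -/
lemma L_dwC_clopen (hL : IsLSpace X) {C : Set X} (hC : IsClopen C) :
    IsClopen (dwC C) := by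
  have hP := hL.1
  set V : Set X := ⋃₀ {A : Set X | IsClopen A ∧ IsUpperSet A ∧ A ∩ C = ∅} with hV
  have hVo : IsOpen V := isOpen_sUnion fun A hA => hA.1.2
  have hVu : IsUpperSet V := isUpperSet_sUnion fun A hA => hA.2.1
  obtain ⟨hWo, hWu⟩ := hL.2 V hVo hVu
  have hkey : dwC C = (closure V)ᶜ := by
    apply Subset.antisymm
    · rintro z ⟨c, hc, hzc⟩ hzW
      have hcW : c ∈ closure V := hWu hzc hzW
      obtain ⟨v, hvC, hvV⟩ := mem_closure_iff.1 hcW C hC.2 hc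
      obtain ⟨A, hA, hvA⟩ := hvV
      exact (eq_empty_iff_forall_notMem.1 hA.2.2 v) ⟨hvA, hvC⟩
    · intro z hz
      by_contra hzd
      have hz' : ∀ c ∈ C, ¬ z ≤ c := fun c hc hle => hzd ⟨c, hc, hle⟩
      obtain ⟨A, hAcl, hAu, hzA, hA⟩ := sep_from_closed hP hC.1 hz'
      have hAC : A ∩ C = ∅ := by
        apply eq_empty_iff_forall_notMem.2
        rintro a ⟨haA, haC⟩
        exact (eq_empty_iff_forall_notMem.1 hA a) ⟨haA, mem_dwC_self' haC⟩
      exact hz (subset_closure (mem_sUnion.2 ⟨A, ⟨hAcl, hAu, hAC⟩, hzA⟩))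
  rw [hkey]
  exact IsClopen.compl (X := X) ⟨isClosed_closure, hWo⟩

/-- In an algebraic L-space, every localic point of a clopen upset belongs to a
clopen Scott upset inside it. -/
lemma core_point (hA : IsAlgebraicLSpace X) {U : Set X} (hU : IsClopen U)
    (hUu : IsUpperSet U) {q : X} (hq : q ∈ localicPts X) (hqU : q ∈ U) :
    ∃ V ∈ ClopSUp X, V ⊆ U ∧ q ∈ V := by
  have hcl : q ∈ closure (coreC U) := hA.2 U hU hUu hqU
  obtain ⟨v, hvq, hvcore⟩ := mem_closure_iff.1 hcl (dwC {q}) hq.2 (mem_dwC_self' rfl)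
  obtain ⟨V, ⟨hVc, hVsub⟩, hvV⟩ := hvcore
  obtain ⟨a, ha, hva⟩ := hvq
  have hq' : q ∈ V := hVc.2.2.1 (mem_singleton_iff.1 ha ▸ hva) hvV
  exact ⟨V, hVc, hVsub, hq'⟩

/-- A Scott upset contained in the closure of a directed union of open upsets is
contained in one of them. -/
lemma scott_directed (hP : IsPriestley X) {F : Set X} (hF : IsScottUp F)
    {ι : Type*} [Nonempty ι] (O : ι → Set X) (hOo : ∀ i, IsOpen (O i))
    (hOu : ∀ i, IsUpperSet (O i)) (hdir : Directed (· ⊆ ·) O)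
    (hsub : F ⊆ closure (⋃ i, O i)) : ∃ i, F ⊆ O i := by
  haveI := hP.1
  have hcov : F ⊆ ⋃ i, O i := by
    intro f hf
    obtain ⟨m, hm, hmf⟩ := exists_min_le hP hF.1 hf
    have hmY : m ∈ localicPts X := hF.2.2 hm
    have hmcl : m ∈ closure (⋃ i, O i) := hsub hm.1
    obtain ⟨v, hvm, hvO⟩ := mem_closure_iff.1 hmcl (dwC {m}) hmY.2 (mem_dwC_self' rfl)
    obtain ⟨i, hvi⟩ := mem_iUnion.1 hvO
    obtain ⟨a, ha, hva⟩ := hvm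
    have : m ∈ O i := hOu i (mem_singleton_iff.1 ha ▸ hva) hvi
    exact mem_iUnion.2 ⟨i, hOu i hmf this⟩
  exact hF.1.isCompact.elim_directed_cover O hOo hcov hdir

/-- Finite unions of clopen Scott upsets are clopen Scott upsets. -/
lemma clopSUp_biUnion {ι : Type*} (s : Finset ι) (f : ι → Set X)
    (h : ∀ i ∈ s, f i ∈ ClopSUp X) : (⋃ i ∈ s, f i) ∈ ClopSUp X := by
  have hclopen : IsClopen (⋃ i ∈ s, f i) := isClopen_biUnion_finset fun i hi => (h i hi).1
  refine ⟨hclopen, hclopen.1, ?_, ?_⟩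
  · intro a b hab ha
    obtain ⟨i, hit, hai⟩ := mem_iUnion₂.1 ha
    exact mem_iUnion₂.2 ⟨i, hit, (h i hit).2.2.1 hab hai⟩
  · rintro m ⟨hm, hmin⟩
    obtain ⟨i, hit, hmi⟩ := mem_iUnion₂.1 hm
    exact (h i hit).2.2.2 ⟨hmi, fun z hz hle =>
      hmin z (mem_iUnion₂.2 ⟨i, hit, hz⟩) hle⟩

end Stmt12Aux

/-- Let `X` be an arithmetic L-space and `F` a Scott upset.
If `y ∈ max Y \ F`, then there is a clopen Scott upset `U` with `y ∈ U` and
`U ∩ F = ∅`. -/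
theorem statement12 (hX : IsArithmeticLSpace X) (F : Set X) (hF : IsScottUp F)
    (y : X) (hy : y ∈ maxOf (localicPts X) \ F) :
    ∃ U ∈ ClopSUp X, y ∈ U ∧ U ∩ F = ∅ := by
  obtain ⟨hAlg, hArith⟩ := hX
  have hL := hAlg.1
  have hP := hL.1
  haveI := hP.1
  haveI := priestley_totSep hP
  obtain ⟨⟨hyY, hymax⟩, hyF⟩ := hy
  by_contra hcon
  push_neg at hcon
  have hFc := hF.1
  have hFu := hF.2.1
  set 𝒰 : Set (Set X) := {U | U ∈ ClopSUp X ∧ y ∈ U} with h𝒰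
  obtain ⟨V₀, hV₀c, -, hV₀y⟩ := core_point hAlg isClopen_univ isUpperSet_univ hyY (mem_univ y)
  have hU₀ : V₀ ∈ 𝒰 := ⟨hV₀c, hV₀y⟩
  haveI : Nonempty ↥𝒰 := ⟨⟨V₀, hU₀⟩⟩
  have hUinter : ∀ U V : Set X, U ∈ 𝒰 → V ∈ 𝒰 → U ∩ V ∈ 𝒰 := fun U V hU hV =>
    ⟨⟨hU.1.1.inter hV.1.1, hArith U V hU.1 hV.1⟩, hU.2, hV.2⟩
  have hUclosed : ∀ U : ↥𝒰, IsClosed (U : Set X) := fun U => U.2.1.1.1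
  have hdir : Directed (· ⊇ ·) (fun U : ↥𝒰 => F ∩ (U : Set X)) := by
    rintro Ua Ub
    exact ⟨⟨(Ua : Set X) ∩ (Ub : Set X), hUinter _ _ Ua.2 Ub.2⟩,
      inter_subset_inter Subset.rfl inter_subset_left,
      inter_subset_inter Subset.rfl inter_subset_right⟩
  have hGne : (⋂ U : ↥𝒰, (F ∩ (U : Set X))).Nonempty :=
    IsCompact.nonempty_iInter_of_directed_nonempty_isCompact_isClosed _ hdir
      (fun U => by
        rw [inter_comm]
        exact hcon U U.2.1 U.2.2)
      (fun U => (hFc.inter (hUclosed U)).isCompact)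
      (fun U => hFc.inter (hUclosed U))
  set G : Set X := ⋂ U : ↥𝒰, (F ∩ (U : Set X)) with hGdef
  have hGc : IsClosed G := isClosed_iInter fun U => hFc.inter (hUclosed U)
  obtain ⟨g₀, hg₀⟩ := hGne
  obtain ⟨m, hmmin, -⟩ := exists_min_le hP hGc hg₀
  have hmG : m ∈ G := hmmin.1
  have hmF : m ∈ F := (mem_iInter.1 hmG ⟨V₀, hU₀⟩).1
  have hmU : ∀ U : Set X, U ∈ 𝒰 → m ∈ U := fun U hU => (mem_iInter.1 hmG ⟨U, hU⟩).2
  have hym : y ≤ m := by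
    by_contra hne
    obtain ⟨A, hAc, hAu, hyA, hmA⟩ := hP.2 y m hne
    obtain ⟨V, hVc, hVsub, hyV⟩ := core_point hAlg hAc hAu hyY hyA
    exact hmA (hVsub (hmU V ⟨hVc, hyV⟩))
  have hmY : m ∈ localicPts X := by
    by_cases hcase : ∃ Cc : Set X, IsClopen Cc ∧ m ∈ Cc ∧ Cc ⊆ dwC ({m} : Set X)
    · obtain ⟨Cc, hCc, hmCc, hCcsub⟩ := hcase
      have heq : dwC Cc = dwC ({m} : Set X) := by
        apply Subset.antisymm
        · rintro w ⟨a, ha, hw⟩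
          obtain ⟨b, hb, hab⟩ := hCcsub ha
          exact ⟨b, hb, le_trans hw hab⟩
        · exact dwC_mono' (singleton_subset_iff.2 hmCc)
      have : IsClopen (dwC Cc) := L_dwC_clopen hL hCc
      rw [heq] at this
      exact this
    · exfalso
      push_neg at hcase
      have hdm : IsClosed (dwC ({m} : Set X)) := dwC_singleton_closed hP m
      have hmcl : m ∈ closure ((dwC ({m} : Set X))ᶜ) := by
        rw [mem_closure_iff]
        intro o ho hmo
        obtain ⟨Cc, hCc, hmCc, hCco⟩ :=
          (isTopologicalBasis_isClopen (X := X)).exists_subset_of_mem_open hmo ho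
        rcases (Cc ∩ (dwC ({m} : Set X))ᶜ).eq_empty_or_nonempty with hemp | hne
        · exact absurd (fun z hz => by_contra fun hzc =>
            (eq_empty_iff_forall_notMem.1 hemp z) ⟨hz, hzc⟩) (hcase Cc hCc hmCc)
        · exact hne.mono (inter_subset_inter hCco Subset.rfl)
      set W : Set X := closure ((dwC ({m} : Set X))ᶜ) with hWdef
      have hWou := hL.2 _ hdm.isOpen_compl (isLowerSet_dwC' _).compl
      have hWclopen : IsClopen W := ⟨isClosed_closure, hWou.1⟩
      have hGW : G ⊆ W := by
        intro g hg
        by_cases hgm : g ≤ m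
        · have : g = m := hmmin.2 g hg hgm
          rw [this]
          exact hmcl
        · refine subset_closure (mem_compl_iff _ _ |>.2 ?_)
          rintro ⟨a, ha, hga⟩
          rw [mem_singleton_iff] at ha
          exact hgm (ha ▸ hga)
      have hUex : ∃ U : ↥𝒰, F ∩ (U : Set X) ∩ Wᶜ = ∅ := by
        by_contra hall
        push_neg at hall
        have hdir2 : Directed (· ⊇ ·) (fun U : ↥𝒰 => F ∩ (U : Set X) ∩ Wᶜ) := by
          rintro Ua Ub
          exact ⟨⟨(Ua : Set X) ∩ (Ub : Set X), hUinter _ _ Ua.2 Ub.2⟩,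
            inter_subset_inter (inter_subset_inter Subset.rfl inter_subset_left) Subset.rfl,
            inter_subset_inter (inter_subset_inter Subset.rfl inter_subset_right) Subset.rfl⟩
        have hne2 : (⋂ U : ↥𝒰, (F ∩ (U : Set X) ∩ Wᶜ)).Nonempty :=
          IsCompact.nonempty_iInter_of_directed_nonempty_isCompact_isClosed _ hdir2
            (fun U => hall U)
            (fun U => ((hFc.inter (hUclosed U)).inter hWclopen.compl.1).isCompact)
            (fun U => (hFc.inter (hUclosed U)).inter hWclopen.compl.1)
        obtain ⟨w, hw⟩ := hne2
        have hwG : w ∈ G := mem_iInter.2 fun U => (mem_iInter.1 hw U).1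
        exact (mem_iInter.1 hw ⟨V₀, hU₀⟩).2 (hGW hwG)
      obtain ⟨Ustar, hUstarW⟩ := hUex
      have hFUW : F ∩ (Ustar : Set X) ⊆ W := fun z hz => by_contra fun hzW =>
        (eq_empty_iff_forall_notMem.1 hUstarW z) ⟨hz, hzW⟩
      -- find a clopen upset `a ⊇ F` with `a ∩ Ustar ⊆ W`
      set 𝒜 : Set (Set X) := {A | IsClopen A ∧ IsUpperSet A ∧ F ⊆ A} with h𝒜
      haveI : Nonempty ↥𝒜 := ⟨⟨univ, isClopen_univ, isUpperSet_univ, subset_univ F⟩⟩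
      have haex : ∃ a : ↥𝒜, (a : Set X) ∩ ((Ustar : Set X) ∩ Wᶜ) = ∅ := by
        by_contra hall
        push_neg at hall
        have hadir : Directed (· ⊇ ·)
            (fun a : ↥𝒜 => (a : Set X) ∩ ((Ustar : Set X) ∩ Wᶜ)) := by
          rintro aa ab
          exact ⟨⟨(aa : Set X) ∩ (ab : Set X), aa.2.1.inter ab.2.1,
              aa.2.2.1.inter ab.2.2.1, subset_inter aa.2.2.2 ab.2.2.2⟩,
            inter_subset_inter inter_subset_left Subset.rfl,
            inter_subset_inter inter_subset_right Subset.rfl⟩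
        have hne3 : (⋂ a : ↥𝒜, ((a : Set X) ∩ ((Ustar : Set X) ∩ Wᶜ))).Nonempty :=
          IsCompact.nonempty_iInter_of_directed_nonempty_isCompact_isClosed _ hadir
            (fun a => hall a)
            (fun a => (a.2.1.1.inter ((hUclosed Ustar).inter hWclopen.compl.1)).isCompact)
            (fun a => a.2.1.1.inter ((hUclosed Ustar).inter hWclopen.compl.1))
        obtain ⟨w, hw⟩ := hne3
        have hwF : w ∈ F := by
          by_contra hwF
          obtain ⟨A, hAc, hAu, hFA, hwA⟩ := closed_upset_sep hP hFc hFu hwF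
          exact hwA (mem_iInter.1 hw ⟨A, hAc, hAu, hFA⟩).1
        have hw' := (mem_iInter.1 hw ⟨univ, isClopen_univ, isUpperSet_univ, subset_univ F⟩).2
        exact hw'.2 (hFUW ⟨hwF, hw'.1⟩)
      obtain ⟨a, haemp⟩ := haex
      have haW : (a : Set X) ∩ (Ustar : Set X) ⊆ W := fun z hz => by_contra fun hzW =>
        (eq_empty_iff_forall_notMem.1 haemp z) ⟨hz.1, hz.2, hzW⟩
      -- find a clopen Scott upset `cS` with `F ⊆ cS ⊆ a`
      set 𝒮 : Set (Set X) := {V | V ∈ ClopSUp X ∧ V ⊆ (a : Set X)} with h𝒮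
      haveI : DecidableEq ↥𝒮 := Classical.decEq _
      haveI : Nonempty (Finset ↥𝒮) := ⟨∅⟩
      have hsdir : Directed (· ⊆ ·) (fun s : Finset ↥𝒮 => ⋃ V ∈ s, (V : Set X)) := by
        rintro sa sb
        refine ⟨sa ∪ sb, ?_, ?_⟩ <;>
        · intro z hz
          obtain ⟨V, hV, hzV⟩ := mem_iUnion₂.1 hz
          refine mem_iUnion₂.2 ⟨V, ?_, hzV⟩
          first
            | exact Finset.mem_union_left _ hV
            | exact Finset.mem_union_right _ hV
      have hcoreeq : coreC (a : Set X) = ⋃ s : Finset ↥𝒮, ⋃ V ∈ s, (V : Set X) := by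
        apply Subset.antisymm
        · rintro v ⟨V, hV, hvV⟩
          exact mem_iUnion.2 ⟨{⟨V, hV⟩}, mem_iUnion₂.2 ⟨⟨V, hV⟩, Finset.mem_singleton_self _, hvV⟩⟩
        · intro v hv
          obtain ⟨s, hs⟩ := mem_iUnion.1 hv
          obtain ⟨V, _, hvV⟩ := mem_iUnion₂.1 hs
          exact ⟨(V : Set X), V.2, hvV⟩
      have hFcl : F ⊆ closure (⋃ s : Finset ↥𝒮, ⋃ V ∈ s, (V : Set X)) := by
        rw [← hcoreeq]
        exact fun z hz => hAlg.2 (a : Set X) a.2.1 a.2.2.1 (a.2.2.2 hz)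
      obtain ⟨s, hFs⟩ := scott_directed hP hF _
        (fun s => (isClopen_biUnion_finset (fun (V : ↥𝒮) (_ : V ∈ s) => V.2.1.1)).2)
        (fun s => (clopSUp_biUnion s _ (fun V _ => V.2.1)).2.2.1)
        hsdir hFcl
      set cS : Set X := ⋃ V ∈ s, (V : Set X) with hcSdef
      have hcS : cS ∈ ClopSUp X := clopSUp_biUnion s _ (fun V _ => V.2.1)
      have hcsub : cS ⊆ (a : Set X) := by
        intro z hz
        obtain ⟨V, _, hzV⟩ := mem_iUnion₂.1 hz
        exact V.2.2 hzV
      have hcU : cS ∩ (Ustar : Set X) ∈ ClopSUp X :=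
        ⟨hcS.1.inter Ustar.2.1.1, hArith _ _ hcS Ustar.2.1⟩
      have hcUW : cS ∩ (Ustar : Set X) ⊆ W := fun z hz => haW ⟨hcsub hz.1, hz.2⟩
      -- the directed family of complements of clopen downsets containing ↓m
      haveI : Nonempty {D : Set X // IsClopen D ∧ IsLowerSet D ∧ dwC ({m} : Set X) ⊆ D} :=
        ⟨⟨univ, isClopen_univ, fun _ _ _ h => h, subset_univ _⟩⟩
      have hOdir : Directed (· ⊆ ·)
          (fun D : {D : Set X // IsClopen D ∧ IsLowerSet D ∧ dwC ({m} : Set X) ⊆ D} =>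
            ((D : Set X))ᶜ) := by
        rintro Da Db
        exact ⟨⟨(Da : Set X) ∩ (Db : Set X), Da.2.1.inter Db.2.1, Da.2.2.1.inter Db.2.2.1,
            subset_inter Da.2.2.2 Db.2.2.2⟩,
          compl_subset_compl.2 inter_subset_left, compl_subset_compl.2 inter_subset_right⟩
      have hcup : (dwC ({m} : Set X))ᶜ =
          ⋃ D : {D : Set X // IsClopen D ∧ IsLowerSet D ∧ dwC ({m} : Set X) ⊆ D},
            ((D : Set X))ᶜ := by
        apply Subset.antisymm
        · intro z hz
          have hz' : ∀ c ∈ ({m} : Set X), ¬ z ≤ c := by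
            rintro c hc
            rw [mem_singleton_iff] at hc
            subst hc
            exact fun hle => hz ⟨c, rfl, hle⟩
          obtain ⟨A, hAc, hAu, hzA, hAdm⟩ := sep_from_closed hP isClosed_singleton hz'
          have hsub : dwC ({m} : Set X) ⊆ Aᶜ := fun w hw hwA =>
            (eq_empty_iff_forall_notMem.1 hAdm w) ⟨hwA, hw⟩
          exact mem_iUnion.2 ⟨⟨Aᶜ, hAc.compl, hAu.compl, hsub⟩, by simpa using hzA⟩
        · intro z hz
          obtain ⟨D, hzD⟩ := mem_iUnion.1 hz
          exact fun hzm => hzD (D.2.2.2 hzm)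
      have hsubW : cS ∩ (Ustar : Set X) ⊆
          closure (⋃ D : {D : Set X // IsClopen D ∧ IsLowerSet D ∧ dwC ({m} : Set X) ⊆ D},
            ((D : Set X))ᶜ) := by
        rw [← hcup]
        exact hcUW
      obtain ⟨D, hD⟩ := scott_directed hP hcU.2 _
        (fun D => D.2.1.compl.2) (fun D => D.2.2.1.compl) hOdir hsubW
      exact hD ⟨hFs hmF, hmU _ Ustar.2⟩ (D.2.2.2 (mem_dwC_self' rfl))
  have hmy : m = y := hymax m hmY hym
  exact hyF (hmy ▸ hmF)
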